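/- Let U ⊆ ℝ⁴ be open and A_x, A_y, A_z, φ : U → ℝ be C¹ with φ nonvanishing on U, and let B(x) be the wave-affine basis frame with rows [1,0,0,0], [0,1,0,0], [0,0,1,0], [A_x, A_y, A_z, −φ], with right Cartan connection C_x(v) = B(x)⁻¹ · (DB(x))(v). Let α be the Action 1-form α_x(v) = A_x(x) v₁ + A_y(x) v₂ + A_z(x) v₃ − φ(x) v₄, with field intensity 2-form F_x(u, v) = D(x ↦ α_x(v))(x)(u) − D(x ↦ α_x(u))(x)(v). Then the vector of affine torsion 2-forms T_x(u, v) = C_x(u)·v − C_x(v)·u has first three components identically zero and fourth component equal to −F_x(u, v)/φ(x); i.e., the excitation 2-forms of the wave-affine frame are (0, 0, 0, −F/φ). -/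

import Mathlib

attribute [local instance] Matrix.normedAddCommGroup Matrix.normedSpace

open scoped Matrix

/-- The right Cartan connection of a basis frame `B`: `C_x(v) = B(x)⁻¹ · (DB(x))(v)`. -/
noncomputable def rightCartan (B : (Fin 4 → ℝ) → Matrix (Fin 4) (Fin 4) ℝ)
    (x v : Fin 4 → ℝ) : Matrix (Fin 4) (Fin 4) ℝ :=
  (B x)⁻¹ * fderiv ℝ B x v

/-- The vector of affine torsion 2-forms `T = C ∧ dx` of the right Cartan connection:
`T_x(u,v) = C_x(u)·v − C_x(v)·u`. -/
noncomputable def affineTorsion (B : (Fin 4 → ℝ) → Matrix (Fin 4) (Fin 4) ℝ)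
    (x u v : Fin 4 → ℝ) : Fin 4 → ℝ :=
  rightCartan B x u *ᵥ v - rightCartan B x v *ᵥ u

/-! The wave-affine frame is the identity with its last row replaced by `w = (A_x, A_y, A_z, −φ)`,
so `DB(x)v = e₃ ⊗ Dw(x)v` and `C_x(v) = (B(x)⁻¹ e₃) ⊗ Dw(x)v`. Hence
`T_x(u, v) = (Dw(x)u · v − Dw(x)v · u) • B(x)⁻¹ e₃`. Since `α_x(v) = w(x) · v`, the scalar is
`F_x(u, v)`, and since `B(x) e₃ = −φ(x) e₃`, we get `B(x)⁻¹ e₃ = −e₃ / φ(x)`. -/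

open Matrix

namespace Matrix

variable {m n R : Type*}

theorem updateRow_zero_eq_vecMulVec [DecidableEq m] [Semiring R] (k : m) (r : n → R) :
    (0 : Matrix m n R).updateRow k r = vecMulVec (Pi.single k 1) r := by
  ext i j
  by_cases hi : i = k
  · subst hi; simp [vecMulVec_apply]
  · simp [vecMulVec_apply, hi]

theorem det_updateRow_one [Fintype n] [DecidableEq n] [CommRing R] (k : n) (r : n → R) :
    (updateRow (1 : Matrix n n R) k r).det = r k := by
  have hr : ∑ i, r i • (1 : Matrix n n R) i = r := by
    ext j
    simp [one_apply]
  simpa [hr] using det_updateRow_sum (1 : Matrix n n R) k r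

theorem updateRow_one_mulVec_single [Fintype n] [DecidableEq n] [CommRing R] (k : n)
    (r : n → R) :
    updateRow (1 : Matrix n n R) k r *ᵥ Pi.single k 1 = r k • Pi.single k 1 := by
  ext i
  rcases eq_or_ne i k with rfl | hi
  · simp
  · simp [hi]

theorem inv_mulVec_eq_inv_smul_of_mulVec_eq_smul [Fintype n] [DecidableEq n] {K : Type*}
    [Field K] {M : Matrix n n K} {c : K} {e : n → K} (hM : IsUnit M.det) (hc : c ≠ 0)
    (h : M *ᵥ e = c • e) :
    M⁻¹ *ᵥ e = c⁻¹ • e := by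
  have := invertibleOfIsUnitDet M hM
  exact inv_mulVec_eq_vec (by rw [mulVec_smul, h, smul_smul, inv_mul_cancel₀ hc, one_smul])

theorem inv_updateRow_one_mulVec_single [Fintype n] [DecidableEq n] {K : Type*} [Field K]
    (k : n) (r : n → K) (hr : r k ≠ 0) :
    (updateRow (1 : Matrix n n K) k r)⁻¹ *ᵥ Pi.single k 1 = (r k)⁻¹ • Pi.single k 1 :=
  inv_mulVec_eq_inv_smul_of_mulVec_eq_smul (by rw [det_updateRow_one]; exact hr.isUnit) hr
    (updateRow_one_mulVec_single k r)

end Matrix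

section Calculus

variable {𝕜 E : Type*} [NontriviallyNormedField 𝕜] [NormedAddCommGroup E] [NormedSpace 𝕜 E]
  {m n : Type*} [Fintype m] [DecidableEq m] [Fintype n] {w : E → n → 𝕜} {x : E}

theorem fderiv_updateRow_apply (B₀ : Matrix m n 𝕜) (k : m) (hw : DifferentiableAt 𝕜 w x)
    (v : E) :
    fderiv 𝕜 (fun y => B₀.updateRow k (w y)) x v =
      (0 : Matrix m n 𝕜).updateRow k (fderiv 𝕜 w x v) := by
  let L : (n → 𝕜) →L[𝕜] Matrix m n 𝕜 :=
    { toFun := fun r => (0 : Matrix m n 𝕜).updateRow k r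
      map_add' := fun a b => by ext i j; by_cases hi : i = k <;> simp [updateRow_apply, hi]
      map_smul' := fun c a => by ext i j; by_cases hi : i = k <;> simp [updateRow_apply, hi]
      cont := continuous_const.update k continuous_id }
  have hL : ∀ r, L r = (0 : Matrix m n 𝕜).updateRow k r := fun _ => rfl
  have hsplit : (fun y => B₀.updateRow k (w y)) = fun y => B₀.updateRow k 0 + L (w y) := by
    funext y
    ext i j
    by_cases hi : i = k <;> simp [hL, updateRow_apply, hi]
  have hderiv : HasFDerivAt (fun y => B₀.updateRow k 0 + L (w y)) (L.comp (fderiv 𝕜 w x)) x :=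
    (L.hasFDerivAt.comp x hw.hasFDerivAt).const_add _
  rw [hsplit, hderiv.fderiv]
  rfl

theorem fderiv_dotProduct_const_apply (hw : DifferentiableAt 𝕜 w x) (v : n → 𝕜) (u : E) :
    fderiv 𝕜 (fun y => w y ⬝ᵥ v) x u = fderiv 𝕜 w x u ⬝ᵥ v := by
  let L : (n → 𝕜) →L[𝕜] 𝕜 :=
    { toFun := fun r => r ⬝ᵥ v
      map_add' := fun a b => add_dotProduct a b v
      map_smul' := fun c a => smul_dotProduct c a v
      cont := by fun_prop }
  exact congrArg (· u) (L.hasFDerivAt.comp x hw.hasFDerivAt).fderiv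

end Calculus

section WaveAffine

variable {w : (Fin 4 → ℝ) → Fin 4 → ℝ} {x : Fin 4 → ℝ}

theorem rightCartan_updateRow (B₀ : Matrix (Fin 4) (Fin 4) ℝ) (k : Fin 4)
    (hw : DifferentiableAt ℝ w x) (v : Fin 4 → ℝ) :
    rightCartan (fun y => B₀.updateRow k (w y)) x v =
      vecMulVec ((B₀.updateRow k (w x))⁻¹ *ᵥ Pi.single k 1) (fderiv ℝ w x v) := by
  rw [rightCartan, fderiv_updateRow_apply B₀ k hw, updateRow_zero_eq_vecMulVec, mul_vecMulVec]

theorem affineTorsion_updateRow (B₀ : Matrix (Fin 4) (Fin 4) ℝ) (k : Fin 4)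
    (hw : DifferentiableAt ℝ w x) (u v : Fin 4 → ℝ) :
    affineTorsion (fun y => B₀.updateRow k (w y)) x u v =
      (fderiv ℝ w x u ⬝ᵥ v - fderiv ℝ w x v ⬝ᵥ u) •
        ((B₀.updateRow k (w x))⁻¹ *ᵥ Pi.single k 1) := by
  rw [affineTorsion, rightCartan_updateRow B₀ k hw, rightCartan_updateRow B₀ k hw,
    vecMulVec_mulVec, vecMulVec_mulVec, op_smul_eq_smul, op_smul_eq_smul, sub_smul]

end WaveAffine

/-- For the wave-affine basis frame `B` with rows `[1,0,0,0]`, `[0,1,0,0]`,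
`[0,0,1,0]`, `[A_x, A_y, A_z, −φ]` (C¹ functions, `φ` nonvanishing on an open `U ⊆ ℝ⁴`),
with Action 1-form `α_x(v) = A_x v₁ + A_y v₂ + A_z v₃ − φ v₄` and field intensity
`F_x(u,v) = dα_x(u,v)`, the vector of affine torsion 2-forms `T_x(u,v)` has first three
components zero and fourth component `−F_x(u,v)/φ(x)`: the excitation 2-forms of the
wave-affine frame are `(0, 0, 0, −F/φ)`. -/
theorem wave_affine_torsion (U : Set (Fin 4 → ℝ)) (hU : IsOpen U)
    (Ax Ay Az φ : (Fin 4 → ℝ) → ℝ)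
    (hAx : ContDiffOn ℝ 1 Ax U) (hAy : ContDiffOn ℝ 1 Ay U)
    (hAz : ContDiffOn ℝ 1 Az U) (hφ : ContDiffOn ℝ 1 φ U)
    (hφne : ∀ x ∈ U, φ x ≠ 0)
    (B : (Fin 4 → ℝ) → Matrix (Fin 4) (Fin 4) ℝ)
    (hB : ∀ x, B x = !![1, 0, 0, 0; 0, 1, 0, 0; 0, 0, 1, 0; Ax x, Ay x, Az x, -φ x])
    (α : (Fin 4 → ℝ) → (Fin 4 → ℝ) → ℝ)
    (hα : ∀ x v, α x v = Ax x * v 0 + Ay x * v 1 + Az x * v 2 - φ x * v 3)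
    (F : (Fin 4 → ℝ) → (Fin 4 → ℝ) → (Fin 4 → ℝ) → ℝ)
    (hF : ∀ x u v, F x u v =
      fderiv ℝ (fun y => α y v) x u - fderiv ℝ (fun y => α y u) x v) :
    ∀ x ∈ U, ∀ u v : Fin 4 → ℝ,
      (∀ k : Fin 3, affineTorsion B x u v k.castSucc = 0) ∧
      affineTorsion B x u v 3 = -(F x u v) / φ x := by
  intro x hx u v
  let w : (Fin 4 → ℝ) → Fin 4 → ℝ := fun y => ![Ax y, Ay y, Az y, -φ y]
  have hBw : B = fun y => (1 : Matrix (Fin 4) (Fin 4) ℝ).updateRow 3 (w y) := by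
    funext y
    rw [hB]
    ext i j
    fin_cases i <;> fin_cases j <;> rfl
  have hαw : α = fun y v => w y ⬝ᵥ v := by
    funext y v
    rw [hα]
    simp only [w, dotProduct, Fin.sum_univ_four, cons_val_zero, cons_val_one, cons_val, neg_mul]
    ring
  have hdiff : ∀ f : (Fin 4 → ℝ) → ℝ, ContDiffOn ℝ 1 f U → DifferentiableAt ℝ f x :=
    fun f hf => (hf.contDiffAt (hU.mem_nhds hx)).differentiableAt one_ne_zero
  have hw : DifferentiableAt ℝ w x := by
    refine differentiableAt_pi.2 fun i => ?_
    fin_cases i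
    exacts [hdiff _ hAx, hdiff _ hAy, hdiff _ hAz, (hdiff _ hφ).neg]
  have hFw : F x u v = fderiv ℝ w x u ⬝ᵥ v - fderiv ℝ w x v ⬝ᵥ u := by
    rw [hF, hαw, fderiv_dotProduct_const_apply hw, fderiv_dotProduct_const_apply hw]
  have hcol : ((1 : Matrix (Fin 4) (Fin 4) ℝ).updateRow 3 (w x))⁻¹ *ᵥ Pi.single 3 1 =
      (-φ x)⁻¹ • Pi.single 3 1 :=
    inv_updateRow_one_mulVec_single 3 (w x) (neg_ne_zero.2 (hφne x hx))
  rw [hBw, affineTorsion_updateRow 1 3 hw, hcol, ← hFw]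
  refine ⟨fun k => ?_, ?_⟩
  · have hk : k.castSucc ≠ 3 := Fin.castSucc_ne_last k
    simp [hk]
  · simp [div_eq_mul_inv]
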